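/- arXiv:2010.15078 — 9 statements merged into one kernel-verified Lean document; each statement's English description precedes it below -/
import Mathlib

section
/- For every θ > 0 and every x ≥ 0, ∫₀^x (θ/(θ+3))·(2+θ+θt)·e^{-θt} dt = 1 − (1 + θx/(θ+3))·e^{-θx}; that is, the cumulative distribution function of the i-Garima distribution is G(x;θ) = 1 − (1 + θx/(θ+3))·e^{-θx}. -/
open Real

noncomputable section

namespace IGarima

def pdf (θ t : ℝ) : ℝ := θ / (θ + 3) * (2 + θ + θ * t) * exp (-θ * t)

def cdf (θ x : ℝ) : ℝ := 1 - (1 + θ * x / (θ + 3)) * exp (-θ * x)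

theorem continuous_pdf (θ : ℝ) : Continuous (pdf θ) := by
  unfold pdf
  fun_prop

@[simp]
theorem cdf_zero (θ : ℝ) : cdf θ 0 = 0 := by
  simp [cdf]

theorem hasDerivAt_cdf {θ : ℝ} (hθ : θ + 3 ≠ 0) (t : ℝ) : HasDerivAt (cdf θ) (pdf θ t) t := by
  have hlin : HasDerivAt (fun t ↦ 1 + θ * t / (θ + 3)) (θ / (θ + 3)) t := by
    simpa using (((hasDerivAt_id t).const_mul θ).div_const (θ + 3)).const_add 1
  have hexp : HasDerivAt (fun t ↦ exp (-θ * t)) (exp (-θ * t) * -θ) t := by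
    simpa using ((hasDerivAt_id t).const_mul (-θ)).exp
  refine ((hlin.mul hexp).const_sub 1).congr_deriv ?_
  rw [pdf]
  field_simp
  ring

theorem integral_pdf {θ : ℝ} (hθ : θ + 3 ≠ 0) (x : ℝ) : ∫ t in (0 : ℝ)..x, pdf θ t = cdf θ x := by
  rw [intervalIntegral.integral_eq_sub_of_hasDerivAt (fun t _ ↦ hasDerivAt_cdf hθ t)
    ((continuous_pdf θ).intervalIntegrable 0 x), cdf_zero, sub_zero]

end IGarima

end

theorem iGarima_cdf_general (θ : ℝ) (hθ : 0 < θ) (x : ℝ) :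
    ∫ t in (0 : ℝ)..x, (θ / (θ + 3)) * (2 + θ + θ * t) * Real.exp (-θ * t)
      = 1 - (1 + θ * x / (θ + 3)) * Real.exp (-θ * x) :=
  IGarima.integral_pdf (by positivity) x

/-- The cdf of the i-Garima distribution:
∫₀^x g(t;θ) dt = 1 − (1 + θx/(θ+3))·e^{-θx} for x ≥ 0. -/
theorem iGarima_cdf (θ : ℝ) (hθ : 0 < θ) (x : ℝ) (hx : 0 ≤ x) :
    ∫ t in (0 : ℝ)..x, (θ / (θ + 3)) * (2 + θ + θ * t) * Real.exp (-θ * t)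
      = 1 - (1 + θ * x / (θ + 3)) * Real.exp (-θ * x) :=
  iGarima_cdf_general θ hθ x
end

section
/- For every θ > 0 and every natural number r ≥ 1, the r-th raw moment of the i-Garima distribution is ∫₀^∞ x^r · (θ/(θ+3))·(2+θ+θx)·e^{-θx} dx = (r!/θ^r)·(θ+r+3)/(θ+3). -/
open MeasureTheory Real Set

lemma iGarima_integrable (θ : ℝ) (hθ : 0 < θ) (n : ℕ) :
    IntegrableOn (fun x : ℝ => x ^ n * Real.exp (-(θ * x))) (Ioi 0) := by
  have hb : 0 < θ / 2 := by linarith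
  refine integrable_of_isBigO_exp_neg hb ?_ ?_
  · exact (continuous_pow n).continuousOn.mul
      (Real.continuous_exp.comp (continuous_const.mul continuous_id).neg).continuousOn
  · have ht : Filter.Tendsto (fun x : ℝ => x ^ (n : ℝ) * Real.exp (-(θ/2) * x))
        Filter.atTop (nhds 0) :=
      tendsto_rpow_mul_exp_neg_mul_atTop_nhds_zero _ _ hb
    have h : (fun x : ℝ => x ^ n * Real.exp (-(θ * x)))
        =ᶠ[Filter.atTop] fun x => (x ^ (n:ℝ) * Real.exp (-(θ/2) * x)) * Real.exp (-(θ/2) * x) := by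
      filter_upwards [Filter.eventually_ge_atTop (0:ℝ)] with x hx
      rw [Real.rpow_natCast, mul_assoc, ← Real.exp_add]
      ring_nf
    refine Asymptotics.IsBigO.congr' ?_ h.symm (by rfl)
    have := Asymptotics.isLittleO_one_iff ℝ |>.mpr ht
    calc (fun x : ℝ => (x ^ (n:ℝ) * Real.exp (-(θ/2) * x)) * Real.exp (-(θ/2) * x))
        =O[Filter.atTop] fun x => (1:ℝ) * Real.exp (-(θ/2) * x) :=
          Asymptotics.IsBigO.mul this.isBigO (Asymptotics.isBigO_refl _ _)
      _ = fun x : ℝ => Real.exp (-(θ/2) * x) := by funext x; ring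

lemma iGarima_key (θ : ℝ) (hθ : 0 < θ) (n : ℕ) :
    ∫ x in Ioi (0:ℝ), x ^ n * Real.exp (-(θ * x)) = n.factorial / θ ^ (n+1) := by
  have h := integral_rpow_mul_exp_neg_mul_Ioi (a := (n:ℝ)+1) (r := θ) (by positivity) hθ
  rw [show ((n:ℝ)+1) - 1 = (n:ℝ) by ring] at h
  have hc : ∫ x in Ioi (0:ℝ), x ^ n * Real.exp (-(θ * x))
      = ∫ x in Ioi (0:ℝ), x ^ (n:ℝ) * Real.exp (-(θ * x)) := by
    refine setIntegral_congr_fun measurableSet_Ioi (fun x hx => ?_)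
    rw [Real.rpow_natCast]
  rw [hc, h, Real.Gamma_nat_eq_factorial]
  rw [show ((n:ℝ)+1) = ((n+1 : ℕ) : ℝ) by push_cast; ring, Real.rpow_natCast]
  simp [Nat.add_sub_cancel]
  field_simp

/-- The r-th raw moment of the i-Garima distribution:
∫₀^∞ x^r g(x;θ) dx = (r!/θ^r)·(θ+r+3)/(θ+3) for r ≥ 1. -/
theorem iGarima_raw_moment (θ : ℝ) (hθ : 0 < θ) (r : ℕ) (hr : 1 ≤ r) :
    ∫ x in Set.Ioi (0 : ℝ),
        x ^ r * ((θ / (θ + 3)) * (2 + θ + θ * x) * Real.exp (-θ * x))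
      = ((r.factorial : ℝ) / θ ^ r) * ((θ + r + 3) / (θ + 3)) := by
  have h1 := iGarima_key θ hθ r
  have h2 := iGarima_key θ hθ (r+1)
  rw [Nat.factorial_succ] at h2; push_cast at h2
  have i1 := iGarima_integrable θ hθ r
  have i2 := iGarima_integrable θ hθ (r+1)
  have hsplit : ∀ x : ℝ,
      x ^ r * ((θ / (θ + 3)) * (2 + θ + θ * x) * Real.exp (-θ * x))
      = (θ / (θ + 3)) * (2 + θ) * (x ^ r * Real.exp (-(θ * x)))
        + (θ / (θ + 3)) * θ * (x ^ (r+1) * Real.exp (-(θ * x))) := by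
    intro x; rw [neg_mul]; ring
  rw [setIntegral_congr_fun measurableSet_Ioi (fun x _ => hsplit x)]
  rw [integral_add ((i1.const_mul _)) ((i2.const_mul _)),
    MeasureTheory.integral_const_mul, MeasureTheory.integral_const_mul, h1, h2]
  have hθ3 : θ + 3 ≠ 0 := by linarith
  have hθ' : θ ≠ 0 := ne_of_gt hθ
  field_simp
  ring
end

section
/- For every θ > 0, the variance of the i-Garima distribution is ∫₀^∞ x² · (θ/(θ+3))·(2+θ+θx)·e^{-θx} dx − (∫₀^∞ x · (θ/(θ+3))·(2+θ+θx)·e^{-θx} dx)² = (θ²+8θ+14)/(θ²(θ+3)²). -/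
/-!
Each moment of the i-Garima law splits into two Gamma integrals
`∫₀^∞ xⁿ e^{-θx} dx = n! / θⁿ⁺¹`, which gives `E[Xᵏ] = k! (θ + k + 3) / (θᵏ (θ + 3))`;
the variance is then `E[X²] - E[X]²` with `E[X] = (θ + 4) / (θ (θ + 3))` and
`E[X²] = 2 (θ + 5) / (θ² (θ + 3))`.
-/

open Real MeasureTheory Set
open scoped Nat

theorem integrableOn_pow_mul_exp_neg_mul_Ioi {θ : ℝ} (hθ : 0 < θ) (n : ℕ) :
    IntegrableOn (fun x : ℝ => x ^ n * exp (-θ * x)) (Ioi 0) := by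
  refine (integrableOn_rpow_mul_exp_neg_mul_rpow (p := 1) (s := n)
    (neg_one_lt_zero.trans_le n.cast_nonneg) one_pos hθ).congr_fun (fun x _ => ?_) measurableSet_Ioi
  simp only [rpow_natCast, rpow_one]

theorem integral_pow_mul_exp_neg_mul_Ioi {θ : ℝ} (hθ : 0 < θ) (n : ℕ) :
    ∫ x in Ioi (0 : ℝ), x ^ n * exp (-θ * x) = n ! / θ ^ (n + 1) := by
  have h := integral_rpow_mul_exp_neg_mul_Ioi (a := n + 1) (by positivity) hθ
  simp only [add_sub_cancel_right, rpow_natCast, Gamma_nat_eq_factorial,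
    div_rpow zero_le_one hθ.le, one_rpow, ← neg_mul] at h
  rw [h, ← Nat.cast_add_one, rpow_natCast]
  ring

noncomputable def iGarimaPDF (θ x : ℝ) : ℝ :=
  θ / (θ + 3) * (2 + θ + θ * x) * exp (-θ * x)

theorem integral_pow_mul_iGarimaPDF {θ : ℝ} (hθ : 0 < θ) (k : ℕ) :
    ∫ x in Ioi (0 : ℝ), x ^ k * iGarimaPDF θ x = k ! * (θ + k + 3) / (θ ^ k * (θ + 3)) := by
  have hsplit : ∀ x : ℝ, x ^ k * iGarimaPDF θ x = θ / (θ + 3) *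
      ((2 + θ) * (x ^ k * exp (-θ * x)) + θ * (x ^ (k + 1) * exp (-θ * x))) := fun x => by
    unfold iGarimaPDF; ring
  simp_rw [hsplit]
  rw [integral_const_mul, integral_add ((integrableOn_pow_mul_exp_neg_mul_Ioi hθ k).const_mul _)
    ((integrableOn_pow_mul_exp_neg_mul_Ioi hθ (k + 1)).const_mul _), integral_const_mul,
    integral_const_mul, integral_pow_mul_exp_neg_mul_Ioi hθ, integral_pow_mul_exp_neg_mul_Ioi hθ,
    Nat.factorial_succ]
  push_cast
  field_simp
  ring

/-- The variance of the i-Garima distribution is (θ²+8θ+14)/(θ²(θ+3)²). -/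
theorem iGarima_variance (θ : ℝ) (hθ : 0 < θ) :
    (∫ x in Set.Ioi (0 : ℝ),
        x ^ 2 * ((θ / (θ + 3)) * (2 + θ + θ * x) * Real.exp (-θ * x)))
      - (∫ x in Set.Ioi (0 : ℝ),
          x * ((θ / (θ + 3)) * (2 + θ + θ * x) * Real.exp (-θ * x))) ^ 2
      = (θ ^ 2 + 8 * θ + 14) / (θ ^ 2 * (θ + 3) ^ 2) := by
  have hmean := integral_pow_mul_iGarimaPDF hθ 1
  have hsecond := integral_pow_mul_iGarimaPDF hθ 2
  simp only [pow_one, iGarimaPDF] at hmean hsecond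
  rw [hmean, hsecond]
  field_simp
  ring
end

section
/- For every θ > 0 and every real t with t < θ, the moment generating function of the i-Garima distribution satisfies ∫₀^∞ e^{tx} · (θ/(θ+3))·(2+θ+θx)·e^{-θx} dx = [1 − (2+θ)t/((3+θ)θ)] · (1 − t/θ)^{-2}. -/
open Real Set MeasureTheory

lemma integral_exp_neg_mul_Ioi {r : ℝ} (hr : 0 < r) :
    ∫ x in Ioi (0 : ℝ), exp (-(r * x)) = 1 / r := by
  simpa [neg_mul] using integral_exp_mul_Ioi (neg_neg_of_pos hr) 0

lemma integral_mul_exp_neg_mul_Ioi {r : ℝ} (hr : 0 < r) :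
    ∫ x in Ioi (0 : ℝ), x * exp (-(r * x)) = 1 / r ^ 2 := by
  simpa [show (2 : ℝ) - 1 = 1 by norm_num] using integral_rpow_mul_exp_neg_mul_Ioi two_pos hr

lemma integral_affine_mul_exp_neg_mul_Ioi {r : ℝ} (hr : 0 < r) (a b : ℝ) :
    ∫ x in Ioi (0 : ℝ), (a + b * x) * exp (-(r * x)) = a / r + b / r ^ 2 := by
  have hexp : IntegrableOn (fun x ↦ exp (-(r * x))) (Ioi 0) := by
    simpa [neg_mul] using exp_neg_integrableOn_Ioi 0 hr
  have hmul : IntegrableOn (fun x ↦ x * exp (-(r * x))) (Ioi 0) := by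
    simpa [neg_mul] using integrableOn_rpow_mul_exp_neg_mul_rpow (p := 1) (s := 1)
      (by norm_num) one_pos hr
  simp_rw [add_mul, mul_assoc]
  rw [integral_add (hexp.const_mul a) (hmul.const_mul b), integral_const_mul, integral_const_mul,
    integral_exp_neg_mul_Ioi hr, integral_mul_exp_neg_mul_Ioi hr]
  ring

/-- The moment generating function of the i-Garima distribution:
∫₀^∞ e^{tx} g(x;θ) dx = [1 − (2+θ)t/((3+θ)θ)]·(1 − t/θ)^{-2} for t < θ. -/
theorem iGarima_mgf (θ : ℝ) (hθ : 0 < θ) (t : ℝ) (ht : t < θ) :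
    ∫ x in Set.Ioi (0 : ℝ),
        Real.exp (t * x) * ((θ / (θ + 3)) * (2 + θ + θ * x) * Real.exp (-θ * x))
      = (1 - (2 + θ) * t / ((3 + θ) * θ)) * (1 - t / θ) ^ (-2 : ℤ) := by
  have hr : 0 < θ - t := sub_pos.2 ht
  have hintegrand : ∀ x : ℝ,
      exp (t * x) * ((θ / (θ + 3)) * (2 + θ + θ * x) * exp (-θ * x))
        = (θ / (θ + 3) * (2 + θ) + θ / (θ + 3) * θ * x) * exp (-((θ - t) * x)) := by
    intro x
    rw [show -((θ - t) * x) = t * x + -θ * x by ring, exp_add]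
    ring
  simp_rw [hintegrand]
  rw [integral_affine_mul_exp_neg_mul_Ioi hr, zpow_neg, zpow_two]
  have hθ3 : θ + 3 ≠ 0 := by positivity
  have hr0 : θ - t ≠ 0 := hr.ne'
  field_simp
  ring
end

section
/- For every θ > 0, the hazard rate function h(x) = θ(2+θ+θx)/(3+θ+θx) of the i-Garima distribution is strictly increasing on (0,∞), and satisfies 0 < h(x) < θ for all x > 0. -/
/-- The hazard rate h(x) = θ(2+θ+θx)/(3+θ+θx) of the i-Garima distribution is
strictly increasing on (0,∞) and satisfies 0 < h(x) < θ for every x > 0. -/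
theorem iGarima_hazard_increasing_and_bounded (θ : ℝ) (hθ : 0 < θ) :
    StrictMonoOn (fun x : ℝ => θ * (2 + θ + θ * x) / (3 + θ + θ * x)) (Set.Ioi 0)
      ∧ ∀ x : ℝ, 0 < x →
          0 < θ * (2 + θ + θ * x) / (3 + θ + θ * x)
            ∧ θ * (2 + θ + θ * x) / (3 + θ + θ * x) < θ := by
  constructor
  · intro a ha b hb hab
    simp only [Set.mem_Ioi] at ha hb
    have hda : (0:ℝ) < 3 + θ + θ * a := by nlinarith
    have hdb : (0:ℝ) < 3 + θ + θ * b := by nlinarith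
    rw [div_lt_div_iff₀ hda hdb]
    nlinarith [mul_pos hθ hθ, mul_pos (mul_pos hθ hθ) (sub_pos.mpr hab)]
  · intro x hx
    have hd : (0:ℝ) < 3 + θ + θ * x := by nlinarith
    constructor
    · apply div_pos _ hd
      nlinarith [mul_pos hθ hθ, mul_pos (mul_pos hθ hθ) hx]
    · rw [div_lt_iff₀ hd]
      nlinarith
end

section
/- For every θ > 0, the mean residual life function m(x) = (4+θ+θx)/(θ(3+θ+θx)) of the i-Garima distribution is strictly decreasing on (0,∞), and m(0) = (θ+4)/(θ(θ+3)), which equals the mean of the distribution. -/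
/-- The mean residual life function m(x) = (4+θ+θx)/(θ(3+θ+θx)) of the
i-Garima distribution is strictly decreasing on (0,∞) and m(0) equals the mean
(θ+4)/(θ(θ+3)). -/
theorem iGarima_mrlf_decreasing (θ : ℝ) (hθ : 0 < θ) :
    StrictAntiOn (fun x : ℝ => (4 + θ + θ * x) / (θ * (3 + θ + θ * x))) (Set.Ioi 0)
      ∧ (4 + θ + θ * 0) / (θ * (3 + θ + θ * 0)) = (θ + 4) / (θ * (θ + 3)) := by
  constructor
  · intro x hx y hy hxy
    simp only [Set.mem_Ioi] at hx hy
    have hdx : 0 < θ * (3 + θ + θ * x) := by positivity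
    have hdy : 0 < θ * (3 + θ + θ * y) := by positivity
    rw [div_lt_div_iff₀ hdy hdx]
    nlinarith [mul_pos hθ hθ, sq_nonneg θ]
  · ring
end

section
/- For every θ > 0 and every p ∈ (0,1), there exists a unique x > 0 such that G(x;θ) = p, where G(x;θ) = 1 − (1 + θx/(θ+3))·e^{-θx}; moreover this unique x satisfies the Lambert-type equation (3+θ+θx)·e^{-(3+θ+θx)} = (1−p)(θ+3)·e^{-(θ+3)}. -/
/-!
Substituting `u = 3 + θ + θx` turns the survival function `1 - G(x;θ)` into
`u e^{-u} / ((θ+3) e^{-(θ+3)})`, so `G(x;θ) = p` is exactly the Lambert-type equation.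
As `x` runs over `(0, ∞)`, `u` runs over `(θ+3, ∞)`, where `u ↦ u e^{-u}` is continuous,
strictly decreasing (as `θ + 3 ≥ 1`) and tends to `0`; hence it takes the value
`(1-p)(θ+3)e^{-(θ+3)}` exactly once there.
-/

open Real Set Filter Topology

theorem strictAntiOn_mul_exp_neg : StrictAntiOn (fun u : ℝ => u * exp (-u)) (Ici 1) := by
  intro u hu v _ huv
  -- `v < u e^{v-u}` because `e^{v-u} > 1 + (v - u)` and `u ≥ 1`.
  have hexp : v - u + 1 < exp (v - u) := add_one_lt_exp (sub_pos.2 huv).ne'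
  have hv : v < u * exp (v - u) := by nlinarith [mem_Ici.1 hu]
  have hsplit : exp (-u) = exp (v - u) * exp (-v) := by rw [← exp_add]; ring_nf
  calc v * exp (-v) < u * exp (v - u) * exp (-v) := by gcongr
    _ = u * exp (-u) := by rw [hsplit, mul_assoc]

theorem existsUnique_mul_exp_neg_eq_mul {a q : ℝ} (ha : 1 ≤ a) (hq : q ∈ Ioo (0 : ℝ) 1) :
    ∃! u, a < u ∧ u * exp (-u) = q * a * exp (-a) := by
  set w : ℝ → ℝ := fun u => u * exp (-u)
  have hwa : 0 < w a := by positivity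
  have hc : q * a * exp (-a) ∈ Ioo 0 (w a) := by
    rw [mul_assoc]
    exact ⟨mul_pos hq.1 hwa, mul_lt_of_lt_one_left hwa hq.2⟩
  have hw_tendsto : Tendsto w atTop (𝓝 0) := by
    simpa using tendsto_pow_mul_exp_neg_atTop_nhds_zero 1
  obtain ⟨b, hb⟩ := (hw_tendsto.eventually (gt_mem_nhds hc.1)).and (eventually_ge_atTop a)
    |>.exists
  obtain ⟨u, hu, hwu⟩ :=
    intermediate_value_Ioo' hb.2 (by fun_prop : Continuous w).continuousOn ⟨hb.1, hc.2⟩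
  refine ⟨u, ⟨hu.1, hwu⟩, fun v hv => strictAntiOn_mul_exp_neg.injOn ?_ ?_ (hv.2.trans hwu.symm)⟩
  · exact ha.trans hv.1.le
  · exact ha.trans hu.1.le

theorem iGarima_cdf_eq_iff {θ x p : ℝ} (hθ : θ + 3 ≠ 0) :
    1 - (1 + θ * x / (θ + 3)) * exp (-θ * x) = p ↔
      (3 + θ + θ * x) * exp (-(3 + θ + θ * x)) = (1 - p) * (θ + 3) * exp (-(θ + 3)) := by
  have hlambert : (3 + θ + θ * x) * exp (-(3 + θ + θ * x))
      = (θ + 3) * exp (-(θ + 3)) * ((1 + θ * x / (θ + 3)) * exp (-θ * x)) := by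
    rw [show -(3 + θ + θ * x) = -(θ + 3) + -θ * x by ring, exp_add]
    field_simp
    ring
  have hK : (θ + 3) * exp (-(θ + 3)) ≠ 0 := mul_ne_zero hθ (exp_ne_zero _)
  rw [hlambert, show (1 - p) * (θ + 3) * exp (-(θ + 3)) = (θ + 3) * exp (-(θ + 3)) * (1 - p) by
    ring, mul_right_inj' hK]
  constructor <;> intro h <;> linarith

/-- Quantile function of the i-Garima distribution: for p ∈ (0,1) there is a
unique x > 0 with G(x;θ) = p, and this x satisfies the Lambert-type equation
(3+θ+θx)·e^{-(3+θ+θx)} = (1−p)(θ+3)·e^{-(θ+3)}. -/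
theorem iGarima_quantile (θ : ℝ) (hθ : 0 < θ) (p : ℝ) (hp : p ∈ Set.Ioo (0 : ℝ) 1) :
    (∃! x : ℝ, 0 < x ∧ 1 - (1 + θ * x / (θ + 3)) * Real.exp (-θ * x) = p)
      ∧ ∀ x : ℝ, 0 < x → 1 - (1 + θ * x / (θ + 3)) * Real.exp (-θ * x) = p →
          (3 + θ + θ * x) * Real.exp (-(3 + θ + θ * x))
            = (1 - p) * (θ + 3) * Real.exp (-(θ + 3)) := by
  simp only [iGarima_cdf_eq_iff (show θ + 3 ≠ 0 by positivity)]
  refine ⟨?_, fun _ _ h => h⟩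
  obtain ⟨u, ⟨hu, hwu⟩, hunique⟩ :=
    existsUnique_mul_exp_neg_eq_mul (a := θ + 3) (q := 1 - p) (by linarith)
      ⟨by linarith [hp.2], by linarith [hp.1]⟩
  have hu_eq : 3 + θ + θ * ((u - (θ + 3)) / θ) = u := by field_simp; ring
  refine ⟨(u - (θ + 3)) / θ, ⟨div_pos (by linarith) hθ, by rwa [hu_eq]⟩, fun y ⟨hy, hwy⟩ => ?_⟩
  have hyu : 3 + θ + θ * y = u := hunique _ ⟨by nlinarith, hwy⟩
  rw [← hyu]
  field_simp
  ring
end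

section
/- Let θ₁ > θ₂ > 0, and let g(x;θ) = (θ/(θ+3))·(2+θ+θx)·e^{-θx} be the i-Garima density. Then the likelihood ratio x ↦ g(x;θ₁)/g(x;θ₂) is strictly decreasing on (0,∞); that is, X ~ i-Garima(θ₁) is smaller than Y ~ i-Garima(θ₂) in the likelihood ratio order. -/
/-! The i-Garima density is `g(x;θ) = c(θ)·(2+θ+θx)·e^{-θx}`, whose logarithmic derivative is
`θ/(2+θ+θx) - θ`. A quotient `u/v` of positive functions is strictly decreasing wherever
`u'/u < v'/v`, so it suffices to compare logarithmic derivatives, and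
`θ₁/A₁ - θ₂/A₂ = 2(θ₁-θ₂)/(A₁A₂)` with `A_i = 2+θᵢ+θᵢx > 2`, which is less than `θ₁ - θ₂`. -/

open Set

lemma strictAntiOn_div_of_hasDerivAt_mul {u v a b : ℝ → ℝ} {s : Set ℝ} (hs : Convex ℝ s)
    (hu : ∀ x ∈ s, HasDerivAt u (u x * a x) x) (hv : ∀ x ∈ s, HasDerivAt v (v x * b x) x)
    (hu₀ : ∀ x ∈ interior s, 0 < u x) (hv₀ : ∀ x ∈ s, 0 < v x)
    (hab : ∀ x ∈ interior s, a x < b x) :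
    StrictAntiOn (u / v) s := by
  refine strictAntiOn_of_deriv_neg hs (fun x hx => ?_) (fun x hx => ?_)
  · exact ((hu x hx).continuousAt.div (hv x hx).continuousAt (hv₀ x hx).ne').continuousWithinAt
  · have hxs := interior_subset hx
    rw [((hu x hxs).div (hv x hxs) (hv₀ x hxs).ne').deriv]
    have hnum : u x * a x * v x - u x * (v x * b x) = u x * v x * (a x - b x) := by ring
    rw [hnum]
    have := hu₀ x hx
    have := hv₀ x hxs
    exact div_neg_of_neg_of_pos
      (mul_neg_of_pos_of_neg (by positivity) (sub_neg.2 (hab x hx))) (by positivity)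

noncomputable def iGarimaPdf (θ x : ℝ) : ℝ :=
  θ / (θ + 3) * (2 + θ + θ * x) * Real.exp (-θ * x)

noncomputable def iGarimaLogDeriv (θ x : ℝ) : ℝ :=
  θ / (2 + θ + θ * x) - θ

lemma iGarimaPdf_pos {θ x : ℝ} (hθ : 0 < θ) (hx : 0 ≤ x) : 0 < iGarimaPdf θ x := by
  unfold iGarimaPdf
  positivity

lemma hasDerivAt_iGarimaPdf {θ x : ℝ} (hx : 2 + θ + θ * x ≠ 0) :
    HasDerivAt (iGarimaPdf θ) (iGarimaPdf θ x * iGarimaLogDeriv θ x) x := by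
  have hlin : HasDerivAt (fun x => 2 + θ + θ * x) θ x := by
    simpa using ((hasDerivAt_id x).const_mul θ).const_add (2 + θ)
  have hexp : HasDerivAt (fun x => Real.exp (-θ * x)) (Real.exp (-θ * x) * -θ) x := by
    simpa using ((hasDerivAt_id x).const_mul (-θ)).exp
  refine ((hlin.const_mul (θ / (θ + 3))).mul hexp).congr_deriv ?_
  unfold iGarimaPdf iGarimaLogDeriv
  field_simp
  ring

lemma iGarimaLogDeriv_lt {θ₁ θ₂ x : ℝ} (hθ₂ : 0 < θ₂) (h : θ₂ < θ₁) (hx : 0 ≤ x) :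
    iGarimaLogDeriv θ₁ x < iGarimaLogDeriv θ₂ x := by
  have hθ₁ := hθ₂.trans h
  have hA₁ : 2 < 2 + θ₁ + θ₁ * x := by nlinarith
  have hA₂ : 2 < 2 + θ₂ + θ₂ * x := by nlinarith
  have hdiff : θ₁ / (2 + θ₁ + θ₁ * x) - θ₂ / (2 + θ₂ + θ₂ * x)
      = (θ₁ - θ₂) * (2 / ((2 + θ₁ + θ₁ * x) * (2 + θ₂ + θ₂ * x))) := by
    field_simp
    ring
  have hsmall : 2 / ((2 + θ₁ + θ₁ * x) * (2 + θ₂ + θ₂ * x)) < 1 :=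
    (div_lt_one (by positivity)).2 (by nlinarith)
  have := mul_lt_of_lt_one_right (sub_pos.2 h) hsmall
  unfold iGarimaLogDeriv
  linarith

/-- Likelihood ratio ordering: for θ₁ > θ₂ > 0 the ratio of i-Garima densities
g(x;θ₁)/g(x;θ₂) is strictly decreasing on (0,∞). -/
theorem iGarima_likelihood_ratio_order (θ₁ θ₂ : ℝ) (hθ₂ : 0 < θ₂) (h : θ₂ < θ₁) :
    StrictAntiOn
      (fun x : ℝ =>
        ((θ₁ / (θ₁ + 3)) * (2 + θ₁ + θ₁ * x) * Real.exp (-θ₁ * x))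
          / ((θ₂ / (θ₂ + 3)) * (2 + θ₂ + θ₂ * x) * Real.exp (-θ₂ * x)))
      (Set.Ioi 0) := by
  have hθ₁ := hθ₂.trans h
  have hA {θ x : ℝ} (hθ : 0 < θ) (hx : x ∈ Ioi 0) : 2 + θ + θ * x ≠ 0 := by
    have := mem_Ioi.1 hx
    positivity
  show StrictAntiOn (iGarimaPdf θ₁ / iGarimaPdf θ₂) (Ioi 0)
  exact strictAntiOn_div_of_hasDerivAt_mul (convex_Ioi 0)
    (fun x hx => hasDerivAt_iGarimaPdf (hA hθ₁ hx))
    (fun x hx => hasDerivAt_iGarimaPdf (hA hθ₂ hx))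
    (fun x hx => iGarimaPdf_pos hθ₁ (le_of_lt (interior_subset hx)))
    (fun x hx => iGarimaPdf_pos hθ₂ (le_of_lt hx))
    (fun x hx => iGarimaLogDeriv_lt hθ₂ h (le_of_lt (interior_subset hx)))
end

section
/- Let θ₁ > θ₂ > 0. Then for every x > 0, G(x;θ₁) ≥ G(x;θ₂), where G(x;θ) = 1 − (1 + θx/(θ+3))·e^{-θx}; that is, i-Garima(θ₁) is stochastically smaller than i-Garima(θ₂). -/
/-!
Write `S(θ, x) = (1 + w(θ) x) e^{-θx}` with `w(θ) = θ/(θ+3)` for the survival function, so the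
claim is that `S` decreases in `θ`. For `θ₂ ≤ θ₁` and `d = θ₁ - θ₂` this amounts to
`1 + w(θ₁) x ≤ (1 + w(θ₂) x) e^{dx}`. Since `w' = 3/(θ+3)² ≤ 1` on `[0, ∞)`, `w(θ₁) ≤ w(θ₂) + d`,
and then `e^{dx} ≥ 1 + dx` gives `(1 + w(θ₂) x) e^{dx} ≥ 1 + (w(θ₂) + d) x ≥ 1 + w(θ₁) x`.
-/

open Real

noncomputable def iGarimaSurvival (θ x : ℝ) : ℝ :=
  (1 + θ * x / (θ + 3)) * exp (-θ * x)

lemma div_add_three_sub_div_add_three_le {s t : ℝ} (hs : 0 ≤ s) (hst : s ≤ t) :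
    t / (t + 3) - s / (s + 3) ≤ t - s := by
  rw [div_sub_div _ _ (by linarith) (by linarith), div_le_iff₀ (by nlinarith)]
  nlinarith [mul_nonneg hs (sub_nonneg.2 hst), mul_nonneg (mul_nonneg hs hs) (sub_nonneg.2 hst)]

lemma one_add_mul_le_one_add_mul_mul_exp {a b d x : ℝ} (hb : 0 ≤ b) (hd : 0 ≤ d) (hx : 0 ≤ x)
    (hab : a ≤ b + d) : 1 + a * x ≤ (1 + b * x) * exp (d * x) := by
  calc 1 + a * x ≤ (1 + b * x) * (1 + d * x) := by
        nlinarith [mul_nonneg (mul_nonneg hb hd) (mul_nonneg hx hx)]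
    _ ≤ (1 + b * x) * exp (d * x) := by
        gcongr
        linarith [add_one_le_exp (d * x)]

lemma iGarimaSurvival_le_of_le {θ₁ θ₂ x : ℝ} (hθ₂ : 0 ≤ θ₂) (h : θ₂ ≤ θ₁) (hx : 0 ≤ x) :
    iGarimaSurvival θ₁ x ≤ iGarimaSurvival θ₂ x := by
  have hw : θ₁ / (θ₁ + 3) ≤ θ₂ / (θ₂ + 3) + (θ₁ - θ₂) := by
    linarith [div_add_three_sub_div_add_three_le hθ₂ h]
  have key := one_add_mul_le_one_add_mul_mul_exp (by positivity) (sub_nonneg.2 h) hx hw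
  have hsplit : exp (-θ₂ * x) = exp ((θ₁ - θ₂) * x) * exp (-θ₁ * x) := by
    rw [← exp_add]; ring_nf
  unfold iGarimaSurvival
  rw [hsplit, ← mul_assoc, mul_div_right_comm θ₁, mul_div_right_comm θ₂]
  exact mul_le_mul_of_nonneg_right key (exp_pos _).le

/-- Stochastic order: for θ₁ > θ₂ > 0 and x > 0, G(x;θ₁) ≥ G(x;θ₂), i.e.
i-Garima(θ₁) is stochastically smaller than i-Garima(θ₂). -/
theorem iGarima_stochastic_order (θ₁ θ₂ : ℝ) (hθ₂ : 0 < θ₂) (h : θ₂ < θ₁)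
    (x : ℝ) (hx : 0 < x) :
    1 - (1 + θ₂ * x / (θ₂ + 3)) * Real.exp (-θ₂ * x)
      ≤ 1 - (1 + θ₁ * x / (θ₁ + 3)) * Real.exp (-θ₁ * x) :=
  sub_le_sub_left (iGarimaSurvival_le_of_le hθ₂.le h.le hx.le) 1
end
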